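/- The functions P_s^* satisfy the recursion: P_1^*(α) = (1/2)(α − z₁)² + ω₁(α) for all α ∈ ℝ, and for each s ∈ {2,…,n} and all α ∈ ℝ, P_s^*(α) = min{ P_{s−1}^*(α), min_{α′∈ℝ} P_{s−1}^*(α′) + λ₁ } + (1/2)(α − z_s)² + ω_s(α). -/

import Mathlib

/-!
Write `c_j(α) = ½(α − z_j)² + ω_j(α)` (`stageCost`), so that
`h_s(y) = Σ_{j<s} c_j(y_j) + λ₁ · #{jumps of y}` and `P_s(i, α) = H(i) + Σ_{i≤j<s} c_j(α) + λ₁`.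
Then `P_{s+1}(i, ·) = P_s(i, ·) + c_s` for `i ≤ s` and `P_s(s, ·) = H(s) + λ₁`, which gives
`P_{s+1}^* = min (P_s^*, H(s) + λ₁) + c_s`; the recursion follows from the dynamic-programming
identity `H(s) = min_α P_s^*(α)`. For `H(s) ≤ P_s(i, α)`, glue a constant block of value `α` on
`[i, s)` to any `y ∈ ℝ^i`: this adds at most one jump. For `min_α P_s^*(α) ≤ h_s(y)`, cut `y`
just before its last constant block `[i, s)`, which is preceded by a jump unless `i = 0`.
-/

open scoped Classical

/-- `h_s(y; z_{1:s})` (0-indexed: coordinates `0,…,s−1` of `y`,`z`,`l`,`u` play the role of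
the paper's coordinates `1,…,s`): the objective of the fused ℓ₀ proximal subproblem
`(1/2)Σ_{j<s}(y_j−z_j)² + λ₁ Σ_{j<s−1}|y_j−y_{j+1}|₀ + Σ_{j<s} ω_j(y_j)`,
with value `⊤` outside the box constraints. -/
noncomputable def hfun (lam1 lam2 : ℝ) (l u z : ℕ → ℝ) (s : ℕ) (y : ℕ → ℝ) : EReal :=
  if ∀ j ∈ Finset.range s, l j ≤ y j ∧ y j ≤ u j then
    ((((1 : ℝ) / 2) * ∑ j ∈ Finset.range s, (y j - z j) ^ 2
      + lam1 * ∑ j ∈ Finset.range (s - 1), (if y j = y (j + 1) then (0 : ℝ) else 1)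
      + lam2 * ∑ j ∈ Finset.range s, (if y j = 0 then (0 : ℝ) else 1) : ℝ) : EReal)
  else ⊤

/-- `H(0) = −λ₁` and, for `s ≥ 1`, `H(s) = min_{y ∈ ℝˢ} h_s(y; z_{1:s})`
(the minimum is attained; it equals the infimum). -/
noncomputable def Hfun (lam1 lam2 : ℝ) (l u z : ℕ → ℝ) : ℕ → EReal
  | 0 => ((-lam1 : ℝ) : EReal)
  | s + 1 => ⨅ y : ℕ → ℝ, hfun lam1 lam2 l u z (s + 1) y

/-- `P_s(i,α) = H(i) + (1/2)Σ_{j=i+1}^{s}(α−z_j)² + Σ_{j=i+1}^{s} ω_j(α) + λ₁`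
(0-indexed: the sums run over `j ∈ [i, s)`). -/
noncomputable def Pfun (lam1 lam2 : ℝ) (l u z : ℕ → ℝ) (s i : ℕ) (α : ℝ) : EReal :=
  Hfun lam1 lam2 l u z i +
    (if ∀ j ∈ Finset.Ico i s, l j ≤ α ∧ α ≤ u j then
      ((((1 : ℝ) / 2) * ∑ j ∈ Finset.Ico i s, (α - z j) ^ 2
        + lam2 * ((s - i : ℕ) : ℝ) * (if α = 0 then (0 : ℝ) else 1) + lam1 : ℝ) : EReal)
    else ⊤)

/-- `P_s^*(α) = min_{i ∈ {0,…,s−1}} P_s(i,α)`. -/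
noncomputable def Pstar (lam1 lam2 : ℝ) (l u z : ℕ → ℝ) (s : ℕ) (α : ℝ) : EReal :=
  ⨅ i ∈ Finset.range s, Pfun lam1 lam2 l u z s i α

open Finset

theorem EReal.sum_ite_coe_top {ι : Type*} (s : Finset ι) (p : ι → Prop) [DecidablePred p]
    (f : ι → ℝ) :
    ∑ i ∈ s, (if p i then (f i : EReal) else ⊤) =
      if ∀ i ∈ s, p i then ((∑ i ∈ s, f i : ℝ) : EReal) else ⊤ := by
  induction s using Finset.cons_induction with
  | empty => simp
  | cons a s ha ih =>
    simp only [sum_cons, ih, forall_mem_cons]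
    by_cases hps : ∀ i ∈ s, p i
    · rw [if_pos hps]
      by_cases hpa : p a
      · rw [if_pos hpa, if_pos ⟨hpa, hps⟩, EReal.coe_add]
      · rw [if_neg hpa, if_neg fun h => hpa h.1, EReal.top_add_coe]
    · rw [if_neg hps, if_neg (show ¬(p a ∧ ∀ i ∈ s, p i) from fun h => hps h.2),
        EReal.add_top_of_ne_bot]
      split <;> simp

theorem Monotone.map_iInf_finset {α β ι : Type*} [CompleteLinearOrder α]
    [CompleteLinearOrder β] {g : α → β} (hg : Monotone g) {s : Finset ι} (hs : s.Nonempty)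
    (f : ι → α) : g (⨅ i ∈ s, f i) = ⨅ i ∈ s, g (f i) := by
  simp only [← Finset.inf_eq_iInf, ← Finset.inf'_eq_inf hs]
  exact map_finset_inf' (OrderHom.mk g hg) hs f

theorem EReal.le_iInf_add {ι : Sort*} {f : ι → EReal} {a b : EReal} (hf : ⨅ i, f i ≠ ⊥)
    (hb : b ≠ ⊥) (h : ∀ i, a ≤ f i + b) : a ≤ (⨅ i, f i) + b :=
  EReal.le_add_of_forall_gt (.inl hf) (.inr hb) fun _ ha' _ hb' => by
    obtain ⟨i, hi⟩ := iInf_lt_iff.1 ha'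
    exact (h i).trans (add_le_add hi.le hb'.le)

noncomputable def stageCost (lam2 : ℝ) (l u z : ℕ → ℝ) (j : ℕ) (α : ℝ) : EReal :=
  if l j ≤ α ∧ α ≤ u j then
    ((((1 : ℝ) / 2) * (α - z j) ^ 2 + lam2 * (if α = 0 then (0 : ℝ) else 1) : ℝ) : EReal)
  else ⊤

noncomputable def jumpCount (y : ℕ → ℝ) (s : ℕ) : ℝ :=
  ∑ j ∈ range (s - 1), if y j = y (j + 1) then 0 else 1

section

variable {lam1 lam2 : ℝ} {l u z : ℕ → ℝ}

theorem stageCost_nonneg (hlam2 : 0 ≤ lam2) (j : ℕ) (α : ℝ) :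
    0 ≤ stageCost lam2 l u z j α := by
  unfold stageCost
  split
  · exact EReal.coe_nonneg.2 (by positivity)
  · exact le_top

theorem jumpCount_nonneg (y : ℕ → ℝ) (s : ℕ) : 0 ≤ jumpCount y s :=
  sum_nonneg fun _ _ => by positivity

theorem jumpCount_const (α : ℝ) (s : ℕ) : jumpCount (fun _ => α) s = 0 := by
  simp [jumpCount]

theorem jumpCount_concat_le (y : ℕ → ℝ) (α : ℝ) {k s : ℕ} (hk : 1 ≤ k) (hks : k ≤ s) :
    jumpCount (fun j => if j < k then y j else α) s ≤ jumpCount y k + 1 := by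
  unfold jumpCount
  rw [← sum_range_add_sum_Ico _ (Nat.sub_le_sub_right hks 1)]
  gcongr ?_ + ?_
  · refine (sum_congr rfl fun j hj => ?_).le
    have := mem_range.1 hj
    simp only [if_pos (by omega : j < k), if_pos (by omega : j + 1 < k)]
  · calc _ ≤ ∑ j ∈ Ico (k - 1) (s - 1), if j = k - 1 then (1 : ℝ) else 0 := by
          refine sum_le_sum fun j hj => ?_
          by_cases hj' : j = k - 1
          · rw [if_pos hj']
            split <;> norm_num
          · have := (mem_Ico.1 hj).1
            simp only [if_neg hj', if_neg (by omega : ¬j < k), if_neg (by omega : ¬j + 1 < k),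
              eq_self, if_true, le_refl]
      _ ≤ 1 := by
          rw [sum_ite_eq']
          split <;> norm_num

theorem jumpCount_add_one_le_of_ne {y : ℕ → ℝ} {k t : ℕ} (hy : y k ≠ y (k + 1)) (hkt : k + 1 ≤ t) :
    jumpCount y (k + 1) + 1 ≤ jumpCount y (t + 1) := by
  unfold jumpCount
  rw [Nat.add_sub_cancel, Nat.add_sub_cancel]
  calc ∑ j ∈ range k, (if y j = y (j + 1) then (0 : ℝ) else 1) + 1
      = ∑ j ∈ range (k + 1), if y j = y (j + 1) then (0 : ℝ) else 1 := by
        rw [sum_range_succ, if_neg hy]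
    _ ≤ _ := sum_le_sum_of_subset_of_nonneg (range_subset_range.2 hkt) fun _ _ _ => by positivity

theorem exists_start_of_last_block (y : ℕ → ℝ) (t : ℕ) :
    ∃ i ≤ t, (∀ j, i ≤ j → j ≤ t → y j = y t) ∧ (0 < i → y (i - 1) ≠ y i) := by
  have hex : ∃ i, ∀ j, i ≤ j → j ≤ t → y j = y t := ⟨t, fun j hj hjt => by rw [le_antisymm hjt hj]⟩
  have hconst := Nat.find_spec hex
  have hit : Nat.find hex ≤ t := Nat.find_min' hex fun j hj hjt => by rw [le_antisymm hjt hj]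
  refine ⟨Nat.find hex, hit, hconst, fun hpos heq => Nat.find_min hex (Nat.sub_one_lt hpos.ne') ?_⟩
  intro j hj hjt
  rcases hj.eq_or_lt with rfl | hlt
  · rw [heq, hconst _ le_rfl hit]
  · exact hconst j (by omega) hjt

theorem hfun_eq_sum_stageCost (s : ℕ) (y : ℕ → ℝ) :
    hfun lam1 lam2 l u z s y =
      ∑ j ∈ range s, stageCost lam2 l u z j (y j) + ((lam1 * jumpCount y s : ℝ) : EReal) := by
  unfold hfun stageCost jumpCount
  rw [EReal.sum_ite_coe_top]
  by_cases hbox : ∀ j ∈ range s, l j ≤ y j ∧ y j ≤ u j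
  · rw [if_pos hbox, if_pos hbox, ← EReal.coe_add, sum_add_distrib, ← mul_sum, ← mul_sum]
    ring_nf
  · rw [if_neg hbox, if_neg hbox, EReal.top_add_coe]

theorem Pfun_eq_add_sum_stageCost (s i : ℕ) (α : ℝ) :
    Pfun lam1 lam2 l u z s i α =
      Hfun lam1 lam2 l u z i + (∑ j ∈ Ico i s, stageCost lam2 l u z j α + (lam1 : EReal)) := by
  unfold Pfun stageCost
  rw [EReal.sum_ite_coe_top]
  by_cases hbox : ∀ j ∈ Ico i s, l j ≤ α ∧ α ≤ u j
  · rw [if_pos hbox, if_pos hbox, ← EReal.coe_add, sum_add_distrib, ← mul_sum, sum_const,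
      Nat.card_Ico, nsmul_eq_mul]
    ring_nf
  · rw [if_neg hbox, if_neg hbox, EReal.top_add_coe]

theorem hfun_nonneg (hlam1 : 0 ≤ lam1) (hlam2 : 0 ≤ lam2) (s : ℕ) (y : ℕ → ℝ) :
    0 ≤ hfun lam1 lam2 l u z s y := by
  rw [hfun_eq_sum_stageCost]
  exact add_nonneg (sum_nonneg fun j _ => stageCost_nonneg hlam2 j (y j))
    (EReal.coe_nonneg.2 (mul_nonneg hlam1 (jumpCount_nonneg y s)))

theorem Hfun_ne_bot (hlam1 : 0 ≤ lam1) (hlam2 : 0 ≤ lam2) :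
    ∀ i, Hfun lam1 lam2 l u z i ≠ ⊥
  | 0 => EReal.coe_ne_bot _
  | s + 1 => ne_bot_of_le_ne_bot EReal.zero_ne_bot (le_iInf (hfun_nonneg hlam1 hlam2 (s + 1)))

theorem Hfun_zero_add_lam1 : Hfun lam1 lam2 l u z 0 + (lam1 : EReal) = 0 := by
  rw [Hfun, ← EReal.coe_add, neg_add_cancel, EReal.coe_zero]

theorem Pfun_succ {t i : ℕ} (hi : i ≤ t) (α : ℝ) :
    Pfun lam1 lam2 l u z (t + 1) i α = Pfun lam1 lam2 l u z t i α + stageCost lam2 l u z t α := by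
  rw [Pfun_eq_add_sum_stageCost, Pfun_eq_add_sum_stageCost, sum_Ico_succ_top hi]
  ac_rfl

theorem Pfun_self (t : ℕ) (α : ℝ) :
    Pfun lam1 lam2 l u z t t α = Hfun lam1 lam2 l u z t + (lam1 : EReal) := by
  rw [Pfun_eq_add_sum_stageCost, Ico_self, sum_empty, zero_add]

theorem Pstar_succ (t : ℕ) (α : ℝ) :
    Pstar lam1 lam2 l u z (t + 1) α =
      min (Pstar lam1 lam2 l u z t α) (Hfun lam1 lam2 l u z t + (lam1 : EReal)) +
        stageCost lam2 l u z t α := by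
  calc Pstar lam1 lam2 l u z (t + 1) α
      = ⨅ i ∈ range (t + 1), (Pfun lam1 lam2 l u z t i α + stageCost lam2 l u z t α) :=
        iInf_congr fun i => iInf_congr fun hi => Pfun_succ (Nat.lt_succ_iff.1 (mem_range.1 hi)) α
    _ = (⨅ i ∈ range (t + 1), Pfun lam1 lam2 l u z t i α) + stageCost lam2 l u z t α :=
        ((monotone_id.add_const _).map_iInf_finset nonempty_range_add_one _).symm
    _ = _ := by rw [range_add_one, Finset.iInf_insert, Pfun_self, inf_comm]; rfl

theorem Pstar_one (α : ℝ) : Pstar lam1 lam2 l u z 1 α = stageCost lam2 l u z 0 α := by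
  rw [Pstar_succ, Hfun_zero_add_lam1, min_eq_right (by simp [Pstar]), zero_add]

theorem hfun_concat_le (hlam1 : 0 ≤ lam1) (y : ℕ → ℝ) (α : ℝ) {k s : ℕ} (hk : 1 ≤ k)
    (hks : k ≤ s) :
    hfun lam1 lam2 l u z s (fun j => if j < k then y j else α) ≤
      hfun lam1 lam2 l u z k y + (∑ j ∈ Ico k s, stageCost lam2 l u z j α + (lam1 : EReal)) := by
  have hsum : ∑ j ∈ range s, stageCost lam2 l u z j (if j < k then y j else α) =
      ∑ j ∈ range k, stageCost lam2 l u z j (y j) + ∑ j ∈ Ico k s, stageCost lam2 l u z j α := by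
    rw [← sum_range_add_sum_Ico _ hks]
    congr 1 <;> refine sum_congr rfl fun j hj => ?_
    · rw [if_pos (mem_range.1 hj)]
    · rw [if_neg (not_lt.2 (mem_Ico.1 hj).1)]
  have hjump : lam1 * jumpCount (fun j => if j < k then y j else α) s ≤
      lam1 * jumpCount y k + lam1 := by
    rw [← mul_add_one]
    exact mul_le_mul_of_nonneg_left (jumpCount_concat_le y α hk hks) hlam1
  rw [hfun_eq_sum_stageCost, hfun_eq_sum_stageCost, hsum]
  calc _ ≤ ∑ j ∈ range k, stageCost lam2 l u z j (y j) + ∑ j ∈ Ico k s, stageCost lam2 l u z j α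
        + ((lam1 * jumpCount y k + lam1 : ℝ) : EReal) :=
        add_le_add_right (EReal.coe_le_coe_iff.2 hjump) _
    _ = _ := by rw [EReal.coe_add]; ac_rfl

theorem Hfun_succ_le_Pfun (hlam1 : 0 ≤ lam1) (hlam2 : 0 ≤ lam2) {t i : ℕ} (hi : i ≤ t)
    (α : ℝ) : Hfun lam1 lam2 l u z (t + 1) ≤ Pfun lam1 lam2 l u z (t + 1) i α := by
  rw [Pfun_eq_add_sum_stageCost]
  cases i with
  | zero =>
    calc Hfun lam1 lam2 l u z (t + 1) ≤ hfun lam1 lam2 l u z (t + 1) fun _ => α := iInf_le _ _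
      _ = ∑ j ∈ range (t + 1), stageCost lam2 l u z j α := by
        rw [hfun_eq_sum_stageCost, jumpCount_const, mul_zero, EReal.coe_zero, add_zero]
      _ = _ := by rw [range_eq_Ico, add_comm _ (lam1 : EReal), ← add_assoc, Hfun_zero_add_lam1,
        zero_add]
  | succ k =>
    have hrest : (0 : EReal) ≤ ∑ j ∈ Ico (k + 1) (t + 1), stageCost lam2 l u z j α + lam1 :=
      add_nonneg (sum_nonneg fun j _ => stageCost_nonneg hlam2 j α) (EReal.coe_nonneg.2 hlam1)
    rw [Hfun]
    exact EReal.le_iInf_add (Hfun_ne_bot hlam1 hlam2 (k + 1))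
      (ne_bot_of_le_ne_bot EReal.zero_ne_bot hrest)
      fun y => (iInf_le _ _).trans (hfun_concat_le hlam1 y α (by omega) (by omega))

theorem Hfun_add_lam1_le (hlam1 : 0 ≤ lam1) {y : ℕ → ℝ} {i t : ℕ} (hit : i ≤ t)
    (hjump : 0 < i → y (i - 1) ≠ y i) :
    Hfun lam1 lam2 l u z i + (lam1 : EReal) ≤
      ∑ j ∈ range i, stageCost lam2 l u z j (y j) + ((lam1 * jumpCount y (t + 1) : ℝ) : EReal) := by
  cases i with
  | zero =>
    rw [Hfun_zero_add_lam1, sum_range_zero, zero_add]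
    exact EReal.coe_nonneg.2 (mul_nonneg hlam1 (jumpCount_nonneg y _))
  | succ k =>
    have hcount := jumpCount_add_one_le_of_ne (k := k) (hjump k.succ_pos) hit
    calc Hfun lam1 lam2 l u z (k + 1) + (lam1 : EReal)
        ≤ hfun lam1 lam2 l u z (k + 1) y + (lam1 : EReal) := add_le_add_left (iInf_le _ y) _
      _ = ∑ j ∈ range (k + 1), stageCost lam2 l u z j (y j)
            + ((lam1 * (jumpCount y (k + 1) + 1) : ℝ) : EReal) := by
        rw [hfun_eq_sum_stageCost, add_assoc, ← EReal.coe_add, mul_add_one]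
      _ ≤ _ := add_le_add_right (EReal.coe_le_coe_iff.2 (mul_le_mul_of_nonneg_left hcount hlam1)) _

theorem iInf_Pstar_le_hfun (hlam1 : 0 ≤ lam1) (t : ℕ) (y : ℕ → ℝ) :
    ⨅ α, Pstar lam1 lam2 l u z (t + 1) α ≤ hfun lam1 lam2 l u z (t + 1) y := by
  obtain ⟨i, hit, hconst, hjump⟩ := exists_start_of_last_block y t
  have htail : ∑ j ∈ Ico i (t + 1), stageCost lam2 l u z j (y j) =
      ∑ j ∈ Ico i (t + 1), stageCost lam2 l u z j (y t) :=
    sum_congr rfl fun j hj => by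
      rw [hconst j (mem_Ico.1 hj).1 (Nat.lt_succ_iff.1 (mem_Ico.1 hj).2)]
  calc ⨅ α, Pstar lam1 lam2 l u z (t + 1) α
      ≤ Pfun lam1 lam2 l u z (t + 1) i (y t) :=
        (iInf_le _ (y t)).trans (iInf₂_le i (mem_range.2 (by omega)))
    _ = Hfun lam1 lam2 l u z i + (lam1 : EReal) +
          ∑ j ∈ Ico i (t + 1), stageCost lam2 l u z j (y t) := by
        rw [Pfun_eq_add_sum_stageCost]; ac_rfl
    _ ≤ ∑ j ∈ range i, stageCost lam2 l u z j (y j) + ((lam1 * jumpCount y (t + 1) : ℝ) : EReal) +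
          ∑ j ∈ Ico i (t + 1), stageCost lam2 l u z j (y t) :=
        add_le_add_left (Hfun_add_lam1_le hlam1 hit hjump) _
    _ = hfun lam1 lam2 l u z (t + 1) y := by
        rw [hfun_eq_sum_stageCost, ← sum_range_add_sum_Ico _ (by omega : i ≤ t + 1), htail]
        ac_rfl

theorem Hfun_succ_eq_iInf_Pstar (hlam1 : 0 ≤ lam1) (hlam2 : 0 ≤ lam2) (t : ℕ) :
    Hfun lam1 lam2 l u z (t + 1) = ⨅ α, Pstar lam1 lam2 l u z (t + 1) α :=
  le_antisymm
    (le_iInf fun α => le_iInf₂ fun _ hi =>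
      Hfun_succ_le_Pfun hlam1 hlam2 (Nat.lt_succ_iff.1 (mem_range.1 hi)) α)
    (le_iInf fun y => iInf_Pstar_le_hfun hlam1 t y)

end

theorem stmt5_general (n : ℕ) (lam1 lam2 : ℝ) (hlam1 : 0 < lam1) (hlam2 : 0 < lam2)
    (l u z : ℕ → ℝ) :
    (∀ α : ℝ, Pstar lam1 lam2 l u z 1 α =
      (if l 0 ≤ α ∧ α ≤ u 0 then
        ((((1 : ℝ) / 2) * (α - z 0) ^ 2 + lam2 * (if α = 0 then (0 : ℝ) else 1) : ℝ) : EReal)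
      else ⊤)) ∧
    (∀ s : ℕ, 2 ≤ s → s ≤ n → ∀ α : ℝ,
      Pstar lam1 lam2 l u z s α =
        min (Pstar lam1 lam2 l u z (s - 1) α)
            ((⨅ α' : ℝ, Pstar lam1 lam2 l u z (s - 1) α') + ((lam1 : ℝ) : EReal)) +
        (if l (s - 1) ≤ α ∧ α ≤ u (s - 1) then
          ((((1 : ℝ) / 2) * (α - z (s - 1)) ^ 2
            + lam2 * (if α = 0 then (0 : ℝ) else 1) : ℝ) : EReal)
        else ⊤)) := by
  refine ⟨Pstar_one, fun s hs _ α => ?_⟩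
  obtain ⟨t, rfl⟩ : ∃ t, s = t + 2 := ⟨s - 2, by omega⟩
  rw [Pstar_succ, Hfun_succ_eq_iInf_Pstar hlam1.le hlam2.le]
  rfl

/-- the recursion for `P_s^*` (0-indexed: the paper's `z_1, ω_1` are `z 0, ω 0`,
and the paper's `z_s, ω_s` are `z (s−1), ω (s−1)`):
`P_1^*(α) = (1/2)(α − z₁)² + ω₁(α)` and, for `s ∈ {2,…,n}`,
`P_s^*(α) = min{P_{s−1}^*(α), min_{α′} P_{s−1}^*(α′) + λ₁} + (1/2)(α − z_s)² + ω_s(α)`. -/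
theorem stmt5 (n : ℕ) (hn : 1 ≤ n) (lam1 lam2 : ℝ) (hlam1 : 0 < lam1) (hlam2 : 0 < lam2)
    (l u z : ℕ → ℝ) (hlu : ∀ i < n, l i ≤ 0 ∧ 0 ≤ u i) :
    (∀ α : ℝ, Pstar lam1 lam2 l u z 1 α =
      (if l 0 ≤ α ∧ α ≤ u 0 then
        ((((1 : ℝ) / 2) * (α - z 0) ^ 2 + lam2 * (if α = 0 then (0 : ℝ) else 1) : ℝ) : EReal)
      else ⊤)) ∧
    (∀ s : ℕ, 2 ≤ s → s ≤ n → ∀ α : ℝ,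
      Pstar lam1 lam2 l u z s α =
        min (Pstar lam1 lam2 l u z (s - 1) α)
            ((⨅ α' : ℝ, Pstar lam1 lam2 l u z (s - 1) α') + ((lam1 : ℝ) : EReal)) +
        (if l (s - 1) ≤ α ∧ α ≤ u (s - 1) then
          ((((1 : ℝ) / 2) * (α - z (s - 1)) ^ 2
            + lam2 * (if α = 0 then (0 : ℝ) else 1) : ℝ) : EReal)
        else ⊤)) :=
  stmt5_general n lam1 lam2 hlam1 hlam2 l u z
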